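/- arXiv:2403.17605 — 6 statements merged into one kernel-verified Lean document; each statement's English description precedes it below -/
import Mathlib

section
/- Let (T, Σ, ν) be a measure space with ν(T) = 1 and X a real Hilbert space. A process f : T → X is weakly measurable if and only if it satisfies condition (P1), i.e., for every s ∈ T the map t ↦ ⟨f(s), f(t)⟩ is measurable with respect to the completion of ν. -/
open MeasureTheory

/-- Let `(T, Σ, ν)` be a measure space with `ν T = 1` and `X` a real
Hilbert space.  A process `f : T → X` is weakly measurable (for every `x ∈ X` the map
`t ↦ ⟪x, f t⟫` is measurable with respect to the completion of `ν`) if and only if it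
satisfies condition (P1): for every `s ∈ T` the map `t ↦ ⟪f s, f t⟫` is measurable with
respect to the completion of `ν`. -/
theorem weaklyMeasurable_iff_P1
    {T : Type*} [MeasurableSpace T] (ν : Measure T) [IsProbabilityMeasure ν]
    {X : Type*} [NormedAddCommGroup X] [InnerProductSpace ℝ X] [CompleteSpace X]
    (f : T → X) :
    (∀ x : X, NullMeasurable (fun t => (inner ℝ x (f t) : ℝ)) ν) ↔
      (∀ s : T, NullMeasurable (fun t => (inner ℝ (f s) (f t) : ℝ)) ν) := by
  constructor
  · exact fun h s => h (f s)
  · intro hP1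
    -- the closed span of the range of f
    set K : Submodule ℝ X := (Submodule.span ℝ (Set.range f)).topologicalClosure with hK
    have hKclosed : IsClosed (K : Set X) := Submodule.isClosed_topologicalClosure _
    haveI : CompleteSpace K := hKclosed.completeSpace_coe
    -- every element of the span gives a null measurable map
    have hspan : ∀ y ∈ Submodule.span ℝ (Set.range f),
        NullMeasurable (fun t => (inner ℝ y (f t) : ℝ)) ν := by
      intro y hy
      induction hy using Submodule.span_induction with
      | mem z hz =>
        obtain ⟨s, rfl⟩ := hz
        exact hP1 s
      | zero => simpa using (measurable_const : Measurable fun _ : T => (0:ℝ)).nullMeasurable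
      | add a b _ _ ha hb =>
        have : (fun t => (inner ℝ (a + b) (f t) : ℝ))
            = fun t => (inner ℝ a (f t) : ℝ) + (inner ℝ b (f t) : ℝ) := by
          funext t; simp [inner_add_left]
        rw [this]; exact Measurable.add ha hb
      | smul c a _ ha =>
        have : (fun t => (inner ℝ (c • a) (f t) : ℝ))
            = fun t => c * (inner ℝ a (f t) : ℝ) := by
          funext t; simp [inner_smul_left]
        rw [this]; exact (measurable_const_mul c).comp ha
    -- every element of K gives a null measurable map
    have hKmeas : ∀ y ∈ K, NullMeasurable (fun t => (inner ℝ y (f t) : ℝ)) ν := by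
      intro y hy
      have hy' : y ∈ closure (Submodule.span ℝ (Set.range f) : Set X) := hy
      obtain ⟨u, hu_mem, hu_tendsto⟩ := mem_closure_iff_seq_limit.1 hy'
      have h_each : ∀ n, AEMeasurable (fun t => (inner ℝ (u n) (f t) : ℝ)) ν :=
        fun n => (hspan (u n) (hu_mem n)).aemeasurable
      have h_tendsto : ∀ t, Filter.Tendsto (fun n => (inner ℝ (u n) (f t) : ℝ))
          Filter.atTop (nhds (inner ℝ y (f t) : ℝ)) := by
        intro t
        exact ((continuous_inner.comp (Continuous.prodMk continuous_id
          continuous_const)).tendsto y).comp hu_tendsto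
      have : AEMeasurable (fun t => (inner ℝ y (f t) : ℝ)) ν :=
        aemeasurable_of_tendsto_metrizable_ae' h_each
          (Filter.Eventually.of_forall h_tendsto)
      exact this.nullMeasurable
    intro x
    -- decompose x using the orthogonal projection onto K
    set p : X := (K.orthogonalProjectionOnto x : X) with hp
    have hft : ∀ t, f t ∈ K := fun t =>
      Submodule.le_topologicalClosure _ (Submodule.subset_span ⟨t, rfl⟩)
    have hxp : x - p ∈ Kᗮ := K.sub_starProjection_mem_orthogonal x
    have heq : (fun t => (inner ℝ x (f t) : ℝ)) = fun t => (inner ℝ p (f t) : ℝ) := by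
      funext t
      have h0 : (inner ℝ (x - p) (f t) : ℝ) = 0 := by rw [real_inner_comm]; exact hxp (f t) (hft t)
      have := inner_sub_left (𝕜 := ℝ) x p (f t)
      rw [h0] at this
      linarith [this]
    rw [heq]
    exact hKmeas p (K.orthogonalProjectionOnto x).2
end

section
/- Let (T, Σ, ν) be a measure space with ν(T) = 1 and X a real Hilbert space. If a process f : T → X satisfies conditions (P1) and (P2), then f is Pettis integrable: there exists x̄ ∈ X such that ⟨x, x̄⟩ = ∫ ⟨x, f(t)⟩ dν(t) for every x ∈ X. -/
open MeasureTheory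

/-- Let `(T, Σ, ν)` be a measure space with `ν T = 1` and `X` a real
Hilbert space.  If a process `f : T → X` satisfies
(P1): for every `s ∈ T` the map `t ↦ ⟪f s, f t⟫` is measurable w.r.t. the completion of `ν`,
and (P2): `t ↦ ‖f t‖` is measurable w.r.t. the completion of `ν` with `∫ ‖f t‖ dν < ∞`,
then `f` is Pettis integrable: there is `x̄ ∈ X` such that `f` is weakly measurable and
`⟪x, x̄⟫ = ∫ ⟪x, f t⟫ dν` for every `x ∈ X`. -/
theorem pettisIntegrable_of_P1_P2
    {T : Type*} [MeasurableSpace T] (ν : Measure T) [IsProbabilityMeasure ν]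
    {X : Type*} [NormedAddCommGroup X] [InnerProductSpace ℝ X] [CompleteSpace X]
    (f : T → X)
    (hP1 : ∀ s : T, NullMeasurable (fun t => (inner ℝ (f s) (f t) : ℝ)) ν)
    (hP2meas : NullMeasurable (fun t => ‖f t‖) ν)
    (hP2int : ∫⁻ t, ENNReal.ofReal ‖f t‖ ∂ν < ⊤) :
    ∃ xbar : X,
      (∀ x : X, NullMeasurable (fun t => (inner ℝ x (f t) : ℝ)) ν) ∧
      (∀ x : X, (inner ℝ x xbar : ℝ) = ∫ t, (inner ℝ x (f t) : ℝ) ∂ν) := by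
  classical
  set S : Submodule ℝ X := Submodule.span ℝ (Set.range f) with hSdef
  -- measurability for y in the span
  have hspan : ∀ y ∈ S, AEMeasurable (fun t => (inner ℝ y (f t) : ℝ)) ν := by
    intro y hy
    induction hy using Submodule.span_induction with
    | mem x hx =>
        obtain ⟨s, rfl⟩ := hx
        exact (hP1 s).aemeasurable
    | zero => simp only [inner_zero_left]; exact aemeasurable_const
    | add a b _ _ ha hb => simp only [inner_add_left]; exact ha.add hb
    | smul c a _ ha => simpa [real_inner_smul_left] using ha.const_mul c
  -- measurability for y in the closure of the span
  have hclos : ∀ y ∈ closure (S : Set X), AEMeasurable (fun t => (inner ℝ y (f t) : ℝ)) ν := by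
    intro y hy
    obtain ⟨u, hu, hulim⟩ := mem_closure_iff_seq_limit.1 hy
    refine aemeasurable_of_tendsto_metrizable_ae Filter.atTop
      (fun n => hspan (u n) (hu n)) ?_
    refine Filter.Eventually.of_forall (fun t => ?_)
    exact (hulim.inner (tendsto_const_nhds (x := f t)))
  -- the closed span and orthogonal projection
  set K : Submodule ℝ X := S.topologicalClosure with hKdef
  haveI : CompleteSpace K := (Submodule.isClosed_topologicalClosure S).completeSpace_coe
  have hmeas : ∀ x : X, AEMeasurable (fun t => (inner ℝ x (f t) : ℝ)) ν := by
    intro x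
    have hproj : ((K.orthogonalProjectionOnto x : X)) ∈ closure (S : Set X) :=
      (K.orthogonalProjectionOnto x).2
    have h1 := hclos _ hproj
    have h2 : ∀ t, (inner ℝ x (f t) : ℝ) = inner ℝ ((K.orthogonalProjectionOnto x : X)) (f t) := by
      intro t
      have hft : f t ∈ K := Submodule.le_topologicalClosure S
        (Submodule.subset_span (Set.mem_range_self t))
      have horth : x - (K.orthogonalProjectionOnto x : X) ∈ Kᗮ :=
        Submodule.sub_starProjection_mem_orthogonal (K := K) x
      have h0 := horth (f t) hft
      have : (inner ℝ (x - (K.orthogonalProjectionOnto x : X)) (f t) : ℝ) = 0 := by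
        rw [real_inner_comm]; exact h0
      rw [inner_sub_left] at this
      linarith
    simpa [funext h2] using h1
  -- integrability of the norm
  have hnormint : Integrable (fun t => ‖f t‖) ν := by
    refine ⟨hP2meas.aemeasurable.aestronglyMeasurable, ?_⟩
    rw [hasFiniteIntegral_iff_norm]
    simpa [Real.norm_eq_abs, abs_of_nonneg (norm_nonneg _)] using hP2int
  -- integrability of the inner ℝ products
  have hint : ∀ x : X, Integrable (fun t => (inner ℝ x (f t) : ℝ)) ν := by
    intro x
    refine Integrable.mono' (hnormint.const_mul ‖x‖) (hmeas x).aestronglyMeasurable ?_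
    refine Filter.Eventually.of_forall (fun t => ?_)
    simpa using norm_inner_le_norm (𝕜 := ℝ) x (f t)
  -- the linear functional
  let φ : X →ₗ[ℝ] ℝ :=
    { toFun := fun x => ∫ t, (inner ℝ x (f t) : ℝ) ∂ν
      map_add' := fun a b => by
        rw [← integral_add (hint a) (hint b)]
        simp [inner_add_left]
      map_smul' := fun c a => by
        simp only [RingHom.id_apply, smul_eq_mul]
        rw [← integral_const_mul]
        simp [real_inner_smul_left] }
  have hbound : ∀ x : X, ‖φ x‖ ≤ (∫ t, ‖f t‖ ∂ν) * ‖x‖ := by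
    intro x
    have h1 : ‖∫ t, (inner ℝ x (f t) : ℝ) ∂ν‖ ≤ ∫ t, ‖x‖ * ‖f t‖ ∂ν := by
      refine norm_integral_le_of_norm_le (hnormint.const_mul ‖x‖) ?_
      exact Filter.Eventually.of_forall (fun t => by
        simpa using norm_inner_le_norm (𝕜 := ℝ) x (f t))
    calc ‖φ x‖ ≤ ∫ t, ‖x‖ * ‖f t‖ ∂ν := h1
    _ = (∫ t, ‖f t‖ ∂ν) * ‖x‖ := by rw [integral_const_mul]; ring
  let L : X →L[ℝ] ℝ := φ.mkContinuous (∫ t, ‖f t‖ ∂ν) hbound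
  refine ⟨(InnerProductSpace.toDual ℝ X).symm L,
    fun x => (hmeas x).nullMeasurable, fun x => ?_⟩
  have : (inner ℝ ((InnerProductSpace.toDual ℝ X).symm L) x : ℝ) = L x :=
    InnerProductSpace.toDual_symm_apply
  rw [real_inner_comm, this]
  rfl
end

section
/- Let (T, Σ, ν) be a measure space with ν(T) = 1, (Ω, 𝒜, P) a probability space, and f : T → L²(Ω, P) a stochastic process. If for every s ∈ T the map t ↦ Cov[f(s), f(t)] is measurable with respect to the completion of ν, and the maps t ↦ E[f(t)] and t ↦ Sd[f(t)] are measurable with respect to the completion of ν and ν-integrable, then f is Pettis integrable. -/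
open MeasureTheory

/-- The mean `E[x]` of a square-integrable random variable. -/
noncomputable def meanL2 {Ω : Type*} [MeasurableSpace Ω] (P : Measure Ω)
    (x : Lp ℝ 2 P) : ℝ := ∫ ω, x ω ∂P

/-- The covariance `Cov[x, y] = E[xy] − E[x]·E[y]` of square-integrable random variables. -/
noncomputable def covL2 {Ω : Type*} [MeasurableSpace Ω] (P : Measure Ω)
    (x y : Lp ℝ 2 P) : ℝ := (inner ℝ x y : ℝ) - meanL2 P x * meanL2 P y

/-- The standard deviation `Sd[x] = Var[x]^{1/2}`. -/
noncomputable def sdL2 {Ω : Type*} [MeasurableSpace Ω] (P : Measure Ω)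
    (x : Lp ℝ 2 P) : ℝ := Real.sqrt (covL2 P x x)

section Aux

variable {Ω : Type*} [MeasurableSpace Ω] (P : Measure Ω) [IsProbabilityMeasure P]

/-- The constant random variable `1` as an element of `L²`. -/
noncomputable def oneL2 : Lp ℝ 2 P := (memLp_const (1:ℝ)).toLp _

lemma oneL2_ae : (oneL2 P : Ω → ℝ) =ᵐ[P] fun _ => (1:ℝ) :=
  MemLp.coeFn_toLp (p := 2) (memLp_const (1:ℝ))

lemma inner_oneL2 (y : Lp ℝ 2 P) : (inner ℝ (oneL2 P) y : ℝ) = meanL2 P y := by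
  rw [L2.inner_def]
  refine integral_congr_ae ?_
  filter_upwards [oneL2_ae P] with ω h
  simp [h]

lemma norm_oneL2 : ‖oneL2 P‖ = 1 := by
  have h1 : (inner ℝ (oneL2 P) (oneL2 P) : ℝ) = 1 := by
    rw [inner_oneL2]
    unfold meanL2
    rw [integral_congr_ae (oneL2_ae P)]
    simp
  have h2 := real_inner_self_eq_norm_sq (oneL2 P)
  nlinarith [norm_nonneg (oneL2 P)]

lemma covL2_self_nonneg (y : Lp ℝ 2 P) : 0 ≤ covL2 P y y := by
  have h1 : |meanL2 P y| ≤ ‖y‖ := by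
    have := abs_real_inner_le_norm (oneL2 P) y
    rwa [inner_oneL2, norm_oneL2, one_mul] at this
  have h2 := real_inner_self_eq_norm_sq y
  have h3 : (meanL2 P y) ^ 2 ≤ ‖y‖ ^ 2 := by
    nlinarith [abs_nonneg (meanL2 P y), sq_abs (meanL2 P y)]
  unfold covL2
  nlinarith

lemma norm_le_sd_add_abs_mean (y : Lp ℝ 2 P) : ‖y‖ ≤ sdL2 P y + |meanL2 P y| := by
  have hsd : sdL2 P y ^ 2 = covL2 P y y := Real.sq_sqrt (covL2_self_nonneg P y)
  have h2 := real_inner_self_eq_norm_sq y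
  have hcov : covL2 P y y = ‖y‖ ^ 2 - meanL2 P y ^ 2 := by unfold covL2; nlinarith
  have hsdnn : 0 ≤ sdL2 P y := Real.sqrt_nonneg _
  have key : ‖y‖ ^ 2 ≤ (sdL2 P y + |meanL2 P y|) ^ 2 := by
    nlinarith [mul_nonneg hsdnn (abs_nonneg (meanL2 P y)), sq_abs (meanL2 P y)]
  calc ‖y‖ = Real.sqrt (‖y‖ ^ 2) := (Real.sqrt_sq (norm_nonneg y)).symm
    _ ≤ Real.sqrt ((sdL2 P y + |meanL2 P y|) ^ 2) := Real.sqrt_le_sqrt key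
    _ = sdL2 P y + |meanL2 P y| :=
        Real.sqrt_sq (add_nonneg hsdnn (abs_nonneg _))

end Aux

set_option synthInstance.maxHeartbeats 1000000 in
/-- Let `(T, Σ, ν)` be a measure space with `ν T = 1`, `(Ω, 𝒜, P)` a
probability space, and `f : T → L²(Ω, P)` a stochastic process.  If for every `s ∈ T` the
map `t ↦ Cov[f s, f t]` is measurable w.r.t. the completion of `ν`, and the maps
`t ↦ E[f t]` and `t ↦ Sd[f t]` are measurable w.r.t. the completion of `ν` and
`ν`-integrable, then `f` is Pettis integrable. -/
theorem pettisIntegrable_of_cov_mean_sd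
    {T : Type*} [MeasurableSpace T] (ν : Measure T) [IsProbabilityMeasure ν]
    {Ω : Type*} [MeasurableSpace Ω] (P : Measure Ω) [IsProbabilityMeasure P]
    (f : T → Lp ℝ 2 P)
    (hcov : ∀ s : T, NullMeasurable (fun t => covL2 P (f s) (f t)) ν)
    (hmeanMeas : NullMeasurable (fun t => meanL2 P (f t)) ν)
    (hmeanInt : Integrable (fun t => meanL2 P (f t)) ν)
    (hsdMeas : NullMeasurable (fun t => sdL2 P (f t)) ν)
    (hsdInt : Integrable (fun t => sdL2 P (f t)) ν) :
    ∃ xbar : Lp ℝ 2 P,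
      (∀ x : Lp ℝ 2 P, NullMeasurable (fun t => (inner ℝ x (f t) : ℝ)) ν) ∧
      (∀ x : Lp ℝ 2 P, (inner ℝ x xbar : ℝ) = ∫ t, (inner ℝ x (f t) : ℝ) ∂ν) := by
  classical
  have hcov' : ∀ s, AEMeasurable (fun t => covL2 P (f s) (f t)) ν :=
    fun s => (hcov s).aemeasurable
  have hmean' : AEMeasurable (fun t => meanL2 P (f t)) ν := hmeanMeas.aemeasurable
  set S : Set (Lp ℝ 2 P) := insert (oneL2 P) (Set.range f) with hS
  -- measurability for elements of the span
  have hspan : ∀ x ∈ Submodule.span ℝ S,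
      AEMeasurable (fun t => (inner ℝ x (f t) : ℝ)) ν := by
    intro x hx
    refine Submodule.span_induction ?_ ?_ ?_ ?_ hx
    · rintro y (rfl | ⟨s, rfl⟩)
      · have : (fun t => (inner ℝ (oneL2 P) (f t) : ℝ)) = fun t => meanL2 P (f t) :=
          funext fun t => inner_oneL2 P (f t)
        rw [this]; exact hmean'
      · have : (fun t => (inner ℝ (f s) (f t) : ℝ)) =
            fun t => covL2 P (f s) (f t) + meanL2 P (f s) * meanL2 P (f t) := by
          funext t; unfold covL2; ring
        rw [this]
        exact (hcov' s).add (hmean'.const_mul _)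
    · simp only [inner_zero_left]; exact aemeasurable_const
    · intro a b _ _ ha hb
      simp only [inner_add_left]; exact ha.add hb
    · intro c a _ ha
      simp only [real_inner_smul_left]; exact ha.const_mul _
  -- measurability for elements of the closure of the span
  set K : Submodule ℝ (Lp ℝ 2 P) := (Submodule.span ℝ S).topologicalClosure with hKdef
  have hclos : ∀ x ∈ K, AEMeasurable (fun t => (inner ℝ x (f t) : ℝ)) ν := by
    intro x hx
    have hx' : x ∈ closure (Submodule.span ℝ S : Set (Lp ℝ 2 P)) := hx
    obtain ⟨u, hu_mem, hu_tend⟩ := mem_closure_iff_seq_limit.1 hx'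
    refine aemeasurable_of_tendsto_metrizable_ae' (fun n => hspan _ (hu_mem n)) ?_
    exact ae_of_all _ fun t => hu_tend.inner tendsto_const_nhds
  haveI : CompleteSpace K := (Submodule.isClosed_topologicalClosure _).completeSpace_coe
  have hfK : ∀ t, f t ∈ K := fun t =>
    Submodule.le_topologicalClosure _ (Submodule.subset_span (Set.mem_insert_of_mem _ ⟨t, rfl⟩))
  have hinner_eq : ∀ (x : Lp ℝ 2 P) (t : T),
      (inner ℝ x (f t) : ℝ) = inner ℝ ((Submodule.orthogonalProjectionOnto K x : Lp ℝ 2 P)) (f t) := by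
    intro x t
    have horth : x - (Submodule.orthogonalProjectionOnto K x : Lp ℝ 2 P) ∈ Kᗮ :=
      Submodule.sub_starProjection_mem_orthogonal (K := K) x
    have h0 : (inner ℝ (f t) (x - (Submodule.orthogonalProjectionOnto K x : Lp ℝ 2 P)) : ℝ) = 0 :=
      (Submodule.mem_orthogonal K _).1 horth (f t) (hfK t)
    rw [inner_sub_right] at h0
    have h1 := real_inner_comm (f t) x
    have h2 := real_inner_comm (f t) ((Submodule.orthogonalProjectionOnto K x : Lp ℝ 2 P))
    linarith
  have hmeas : ∀ x : Lp ℝ 2 P, AEMeasurable (fun t => (inner ℝ x (f t) : ℝ)) ν := by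
    intro x
    have := hclos _ (Submodule.orthogonalProjectionOnto K x).2
    have heq : (fun t => (inner ℝ x (f t) : ℝ)) =
        fun t => (inner ℝ ((Submodule.orthogonalProjectionOnto K x : Lp ℝ 2 P)) (f t) : ℝ) :=
      funext (hinner_eq x)
    rw [heq]; exact this
  -- integrability
  set g : T → ℝ := fun t => sdL2 P (f t) + |meanL2 P (f t)| with hg
  have hgInt : Integrable g ν := hsdInt.add hmeanInt.abs
  have hnormle : ∀ t, ‖f t‖ ≤ g t := fun t => norm_le_sd_add_abs_mean P (f t)
  have hgnn : ∀ t, 0 ≤ g t := fun t => le_trans (norm_nonneg _) (hnormle t)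
  have hInt : ∀ x : Lp ℝ 2 P, Integrable (fun t => (inner ℝ x (f t) : ℝ)) ν := by
    intro x
    refine (hgInt.const_mul ‖x‖).mono' (hmeas x).aestronglyMeasurable ?_
    refine ae_of_all _ fun t => ?_
    calc ‖(inner ℝ x (f t) : ℝ)‖ = |(inner ℝ x (f t) : ℝ)| := rfl
      _ ≤ ‖x‖ * ‖f t‖ := abs_real_inner_le_norm _ _
      _ ≤ ‖x‖ * g t := mul_le_mul_of_nonneg_left (hnormle t) (norm_nonneg x)
  -- the continuous linear functional
  let L : Lp ℝ 2 P →ₗ[ℝ] ℝ :=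
    { toFun := fun x => ∫ t, (inner ℝ x (f t) : ℝ) ∂ν
      map_add' := fun x y => by
        simp only [inner_add_left]
        exact integral_add (hInt x) (hInt y)
      map_smul' := fun c x => by
        simp only [real_inner_smul_left, RingHom.id_apply]
        exact integral_const_mul c _ }
  have hLbound : ∀ x : Lp ℝ 2 P, ‖L x‖ ≤ (∫ t, g t ∂ν) * ‖x‖ := by
    intro x
    have h1 : ‖L x‖ ≤ ∫ t, ‖(inner ℝ x (f t) : ℝ)‖ ∂ν := norm_integral_le_integral_norm _
    have h2 : (∫ t, ‖(inner ℝ x (f t) : ℝ)‖ ∂ν) ≤ ∫ t, ‖x‖ * g t ∂ν := by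
      refine integral_mono (hInt x).norm (hgInt.const_mul _) fun t => ?_
      calc ‖(inner ℝ x (f t) : ℝ)‖ ≤ ‖x‖ * ‖f t‖ := abs_real_inner_le_norm _ _
        _ ≤ ‖x‖ * g t := mul_le_mul_of_nonneg_left (hnormle t) (norm_nonneg x)
    have h3 : (∫ t, ‖x‖ * g t ∂ν) = (∫ t, g t ∂ν) * ‖x‖ := by
      rw [integral_const_mul]; ring
    linarith
  let Lc : Lp ℝ 2 P →L[ℝ] ℝ := LinearMap.mkContinuous L (∫ t, g t ∂ν) hLbound
  refine ⟨(InnerProductSpace.toDual ℝ (Lp ℝ 2 P)).symm Lc,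
    fun x => (hmeas x).nullMeasurable, fun x => ?_⟩
  rw [real_inner_comm]
  exact InnerProductSpace.toDual_symm_apply
end

section
/- Let r < 1 and let (ξ, ζ) be an equilibrium moment on [0,1]: ξ : [0,1]² → ℝ and ζ : [0,1] → ℝ are square-integrable measurable functions satisfying obedience (ξ(t,t) = r·∫₀¹ ξ(t,t') dt' + ζ(t) for every t ∈ [0,1]) and positivity (for every n and t₁,…,tₙ ∈ [0,1] the (n+1)×(n+1) matrix with (i,j) entries ξ(tᵢ,tⱼ) for i,j ≤ n, entries ζ(tᵢ) in the last row and column, and bottom-right entry 1, is symmetric positive semidefinite). Then (∫₀¹ ζ(t) dt)² ≤ ∬ ξ(s,t) ds dt ≤ min{ ∫₀¹ ξ(t,t) dt , 1/(1 − r)² }. -/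
open MeasureTheory Set

/-- Lebesgue measure restricted to the unit interval of agents `[0,1]`. -/
noncomputable def I01 : Measure ℝ := volume.restrict (Icc 0 1)

/-- An equilibrium moment `(ξ, ζ)` on `[0,1]` for the symmetric payoff parameter `r`:
`ξ` and `ζ` are square-integrable measurable functions satisfying obedience
(`ξ t t = r·∫ ξ t t' dt' + ζ t` for every `t ∈ [0,1]`) and positivity (every finite
`(n+1)×(n+1)` matrix `[[ξ(tᵢ,tⱼ)], (ζ(tᵢ)); (ζ(tⱼ)), 1]` is symmetric positive
semidefinite, the state variance being normalized to `1`). -/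
def IsEqMoment (r : ℝ) (ξ : ℝ → ℝ → ℝ) (ζ : ℝ → ℝ) : Prop :=
  Measurable (Function.uncurry ξ) ∧ Measurable ζ ∧
  Integrable (fun p : ℝ × ℝ => (ξ p.1 p.2) ^ 2) (I01.prod I01) ∧
  Integrable (fun t => (ζ t) ^ 2) I01 ∧
  (∀ t ∈ Icc (0:ℝ) 1, ξ t t = r * (∫ t', ξ t t' ∂I01) + ζ t) ∧
  (∀ (n : ℕ) (ts : Fin n → ℝ), (∀ i, ts i ∈ Icc (0:ℝ) 1) →
    (Matrix.of fun i j : Fin n ⊕ Unit =>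
      match i, j with
      | Sum.inl a, Sum.inl b => ξ (ts a) (ts b)
      | Sum.inl a, Sum.inr _ => ζ (ts a)
      | Sum.inr _, Sum.inl b => ζ (ts b)
      | Sum.inr _, Sum.inr _ => (1 : ℝ)).PosSemidef)

instance : IsProbabilityMeasure I01 :=
  ⟨by simp [I01, Real.volume_Icc]⟩

namespace EqMomentAux

/-- The projection on a coordinate is measure preserving from a product of probability
measures. -/
lemma measurePreserving_eval {n : ℕ} (μ : Measure ℝ) [IsProbabilityMeasure μ] (i : Fin n) :
    MeasurePreserving (fun ts : Fin n → ℝ => ts i)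
      (Measure.pi fun _ => μ) μ := by
  refine ⟨measurable_pi_apply i, ?_⟩
  refine Measure.ext fun s hs => ?_
  rw [Measure.map_apply (measurable_pi_apply i) hs]
  have hset : (fun ts : Fin n → ℝ => ts i) ⁻¹' s
      = Set.pi univ (fun k => if k = i then s else univ) := by
    ext x
    simp only [mem_preimage, Set.mem_pi, mem_univ, true_implies]
    constructor
    · intro hx k
      split_ifs with hk
      · subst hk; exact hx
      · trivial
    · intro hx
      have := hx i
      simpa using this
  rw [hset, Measure.pi_pi]
  simp [apply_ite μ]

/-- The projection on a pair of distinct coordinates is measure preserving from a product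
of probability measures to the product. -/
lemma measurePreserving_eval_pair {n : ℕ} (μ : Measure ℝ) [IsProbabilityMeasure μ]
    {i j : Fin n} (hij : i ≠ j) :
    MeasurePreserving (fun ts : Fin n → ℝ => (ts i, ts j))
      (Measure.pi fun _ => μ) (μ.prod μ) := by
  classical
  have hm : Measurable fun ts : Fin n → ℝ => (ts i, ts j) :=
    (measurable_pi_apply i).prodMk (measurable_pi_apply j)
  refine ⟨hm, ?_⟩
  refine (Measure.prod_eq fun s t hs ht => ?_).symm
  rw [Measure.map_apply hm (hs.prod ht)]
  have hset : (fun ts : Fin n → ℝ => (ts i, ts j)) ⁻¹' (s ×ˢ t)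
      = Set.pi univ (fun k => if k = i then s else if k = j then t else univ) := by
    ext x
    simp only [mem_preimage, mem_prod, Set.mem_pi, mem_univ, true_implies]
    constructor
    · rintro ⟨h1, h2⟩ k
      split_ifs with h h'
      · subst h; exact h1
      · subst h'; exact h2
      · trivial
    · intro hx
      have h1 := hx i
      have h2 := hx j
      rw [if_pos rfl] at h1
      rw [if_neg hij.symm, if_pos rfl] at h2
      exact ⟨h1, h2⟩
  rw [hset, Measure.pi_pi]
  have hi : i ∈ (Finset.univ : Finset (Fin n)) := Finset.mem_univ i
  have hj : j ∈ Finset.univ.erase i := Finset.mem_erase.2 ⟨hij.symm, Finset.mem_univ j⟩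
  rw [← Finset.mul_prod_erase _ _ hi, ← Finset.mul_prod_erase _ _ hj]
  rw [if_pos rfl, if_neg hij.symm, if_pos rfl]
  have : ∀ k ∈ (Finset.univ.erase i).erase j,
      μ (if k = i then s else if k = j then t else univ) = 1 := by
    intro k hk
    rcases Finset.mem_erase.1 hk with ⟨hkj, hk'⟩
    rcases Finset.mem_erase.1 hk' with ⟨hki, _⟩
    rw [if_neg hki, if_neg hkj]
    exact measure_univ
  rw [Finset.prod_congr rfl this]
  simp [mul_assoc]

/-- A.e. all coordinates of a `Measure.pi`-random vector land in `[0,1]`. -/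
lemma ae_mem_Icc {n : ℕ} :
    ∀ᵐ ts : Fin n → ℝ ∂(Measure.pi fun _ => I01), ∀ i, ts i ∈ Icc (0:ℝ) 1 := by
  rw [ae_all_iff]
  intro i
  rw [ae_iff]
  have : {ts : Fin n → ℝ | ¬ ts i ∈ Icc (0:ℝ) 1}
      = (fun ts : Fin n → ℝ => ts i) ⁻¹' (Icc (0:ℝ) 1)ᶜ := rfl
  rw [this]
  apply Measure.pi_eval_preimage_null
  rw [I01, Measure.restrict_apply measurableSet_Icc.compl]
  simp

/-- The key integral positivity lemma: if a measurable integrable kernel has integrable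
diagonal and all its "all-ones" finite quadratic sums over points of `[0,1]` are
nonnegative, then its double integral is nonnegative. -/
lemma kernel_integral_nonneg {f : ℝ → ℝ → ℝ}
    (hf : Measurable (Function.uncurry f))
    (hint : Integrable (Function.uncurry f) (I01.prod I01))
    (hdiag : Integrable (fun t => f t t) I01)
    (hpsd : ∀ (n : ℕ) (ts : Fin n → ℝ), (∀ i, ts i ∈ Icc (0:ℝ) 1) →
      0 ≤ ∑ i, ∑ j, f (ts i) (ts j)) :
    0 ≤ ∫ p, Function.uncurry f p ∂(I01.prod I01) := by
  classical
  set μ := I01 with hμ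
  set P : ℝ := ∫ p, Function.uncurry f p ∂(μ.prod μ) with hP
  set D : ℝ := ∫ t, f t t ∂μ with hD
  -- integrability of each term
  have hterm : ∀ (n : ℕ) (i j : Fin n),
      Integrable (fun ts : Fin n → ℝ => f (ts i) (ts j)) (Measure.pi fun _ => μ) := by
    intro n i j
    rcases eq_or_ne i j with rfl | hij
    · have := (measurePreserving_eval μ i).integrable_comp
        (g := fun t => f t t) (hf.comp (measurable_id.prodMk measurable_id)).aestronglyMeasurable
      exact this.2 hdiag
    · have := (measurePreserving_eval_pair μ hij).integrable_comp
        (g := Function.uncurry f) hf.aestronglyMeasurable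
      exact this.2 hint
  have hval : ∀ (n : ℕ) (i j : Fin n),
      (∫ ts : Fin n → ℝ, f (ts i) (ts j) ∂(Measure.pi fun _ => μ))
        = if i = j then D else P := by
    intro n i j
    rcases eq_or_ne i j with rfl | hij
    · have hmp := measurePreserving_eval (n := n) μ i
      have key := integral_map (φ := fun ts : Fin n → ℝ => ts i)
        (f := fun t => f t t) (measurable_pi_apply i).aemeasurable
        (by rw [hmp.map_eq]
            exact (hf.comp (measurable_id.prodMk measurable_id)).aestronglyMeasurable)
      rw [hmp.map_eq] at key
      rw [if_pos rfl, hD, ← key]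
    · have hmp := measurePreserving_eval_pair (n := n) μ hij
      have key := integral_map (φ := fun ts : Fin n → ℝ => (ts i, ts j))
        (f := Function.uncurry f)
        ((measurable_pi_apply i).prodMk (measurable_pi_apply j)).aemeasurable
        (by rw [hmp.map_eq]; exact hf.aestronglyMeasurable)
      rw [hmp.map_eq] at key
      rw [if_neg hij, hP, key]
      rfl
  -- the n-point inequality
  have hkey : ∀ n : ℕ, 0 ≤ (n : ℝ) * D + (n : ℝ) * ((n : ℝ) - 1) * P := by
    intro n
    have h0 : 0 ≤ ∫ ts : Fin n → ℝ, (∑ i, ∑ j, f (ts i) (ts j)) ∂(Measure.pi fun _ => μ) := by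
      apply integral_nonneg_of_ae
      filter_upwards [ae_mem_Icc (n := n)] with ts hts
      exact hpsd n ts hts
    have hsum : (∫ ts : Fin n → ℝ, (∑ i, ∑ j, f (ts i) (ts j)) ∂(Measure.pi fun _ => μ))
        = (n : ℝ) * D + (n : ℝ) * ((n : ℝ) - 1) * P := by
      rw [integral_finset_sum _ (fun i _ => integrable_finset_sum _ (fun j _ => hterm n i j))]
      have : ∀ i : Fin n, (∫ ts : Fin n → ℝ, (∑ j, f (ts i) (ts j)) ∂(Measure.pi fun _ => μ))
          = D + ((n : ℝ) - 1) * P := by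
        intro i
        rw [integral_finset_sum _ (fun j _ => hterm n i j)]
        have : ∀ j : Fin n, (∫ ts : Fin n → ℝ, f (ts i) (ts j) ∂(Measure.pi fun _ => μ))
            = P + (if i = j then D - P else 0) := by
          intro j
          rw [hval n i j]
          split_ifs <;> ring
        rw [Finset.sum_congr rfl fun j _ => this j, Finset.sum_add_distrib,
          Finset.sum_const, Finset.sum_ite_eq, if_pos (Finset.mem_univ i)]
        simp [Finset.card_univ]
        ring
      rw [Finset.sum_congr rfl fun i _ => this i, Finset.sum_const]
      simp [Finset.card_univ]
      ring
    linarith [hsum ▸ h0]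
  -- limit argument
  by_contra hneg
  push_neg at hneg
  obtain ⟨m, hm⟩ := exists_nat_gt (D / (-P))
  have hPpos : 0 < -P := by linarith
  have hDm : D < (m : ℝ) * (-P) := by
    rw [div_lt_iff₀ hPpos] at hm
    exact hm
  have := hkey (m + 1)
  push_cast at this
  nlinarith [this, hDm, hPpos]

/-- Quadratic form of a positive semidefinite real matrix, written as a double sum. -/
lemma posSemidef_double_sum {m : Type*} [Fintype m] {M : Matrix m m ℝ}
    (hM : M.PosSemidef) (x : m → ℝ) :
    0 ≤ ∑ a, ∑ b, x a * M a b * x b := by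
  have h := hM.dotProduct_mulVec_nonneg x
  have hrw : dotProduct (star x) (M.mulVec x) = ∑ a, ∑ b, x a * M a b * x b := by
    simp only [dotProduct, Matrix.mulVec, Pi.star_apply, star_trivial, Finset.mul_sum]
    exact Finset.sum_congr rfl fun a _ => Finset.sum_congr rfl fun b _ => by ring
  rw [hrw] at h
  exact h

end EqMomentAux

open EqMomentAux Function in
/-- bounds on equilibrium moments.  Let `r < 1` and `(ξ, ζ)` be an
equilibrium moment on `[0,1]`.  Then
`(∫ ζ)² ≤ ∬ ξ ≤ min { ∫ ξ(t,t) dt , 1/(1−r)² }`. -/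
theorem eqMoment_bounds (r : ℝ) (hr : r < 1) (ξ : ℝ → ℝ → ℝ) (ζ : ℝ → ℝ)
    (h : IsEqMoment r ξ ζ) :
    (∫ t, ζ t ∂I01) ^ 2 ≤ ∫ s, ∫ t, ξ s t ∂I01 ∂I01 ∧
    ∫ s, ∫ t, ξ s t ∂I01 ∂I01 ≤ min (∫ t, ξ t t ∂I01) (1 / (1 - r) ^ 2) := by
  classical
  obtain ⟨hmξ, hmζ, hsqξ, hsqζ, hobed, hpos⟩ := h
  -- basic integrabilities
  have hξint : Integrable (uncurry ξ) (I01.prod I01) := by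
    have h2 : MemLp (uncurry ξ) 2 (I01.prod I01) :=
      (memLp_two_iff_integrable_sq hmξ.aestronglyMeasurable).2 hsqξ
    exact (memLp_one_iff_integrable.1 (h2.mono_exponent (by norm_num)))
  have hζint : Integrable ζ I01 := by
    have h2 : MemLp ζ 2 I01 :=
      (memLp_two_iff_integrable_sq hmζ.aestronglyMeasurable).2 hsqζ
    exact (memLp_one_iff_integrable.1 (h2.mono_exponent (by norm_num)))
  have hrowint : Integrable (fun t => ∫ t', ξ t t' ∂I01) I01 := hξint.integral_prod_left
  have hmdiag : Measurable fun t => ξ t t :=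
    hmξ.comp (measurable_id.prodMk measurable_id)
  have haeIcc : ∀ᵐ t ∂I01, t ∈ Icc (0:ℝ) 1 := ae_restrict_mem measurableSet_Icc
  have hdiag_eq : (fun t => ξ t t) =ᵐ[I01] fun t => r * (∫ t', ξ t t' ∂I01) + ζ t := by
    filter_upwards [haeIcc] with t ht
    exact hobed t ht
  have hdiagint : Integrable (fun t => ξ t t) I01 :=
    ((hrowint.const_mul r).add hζint).congr hdiag_eq.symm
  -- notation
  set Z : ℝ := ∫ t, ζ t ∂I01 with hZ
  set X : ℝ := ∫ s, ∫ t, ξ s t ∂I01 ∂I01 with hX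
  set D : ℝ := ∫ t, ξ t t ∂I01 with hDdef
  have hXP : X = ∫ p, uncurry ξ p ∂(I01.prod I01) := by
    rw [hX, integral_integral hξint]
    rfl
  -- D = r * X + Z
  have hDXZ : D = r * X + Z := by
    rw [hDdef, integral_congr_ae hdiag_eq, integral_add (hrowint.const_mul r) hζint,
      integral_const_mul _ _]
  -- integrable helpers on the product
  have hζfst : Integrable (fun p : ℝ × ℝ => ζ p.1) (I01.prod I01) := by
    have : (fun p : ℝ × ℝ => ζ p.1) = ζ ∘ Prod.fst := rfl
    rw [this]
    refine (MeasurePreserving.integrable_comp ?_ hζint.aestronglyMeasurable).2 hζint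
    exact ⟨measurable_fst, by simp⟩
  have hζsnd : Integrable (fun p : ℝ × ℝ => ζ p.2) (I01.prod I01) := by
    have : (fun p : ℝ × ℝ => ζ p.2) = ζ ∘ Prod.snd := rfl
    rw [this]
    refine (MeasurePreserving.integrable_comp ?_ hζint.aestronglyMeasurable).2 hζint
    exact ⟨measurable_snd, by simp⟩
  have hdfst : Integrable (fun p : ℝ × ℝ => ξ p.1 p.1) (I01.prod I01) := by
    have : (fun p : ℝ × ℝ => ξ p.1 p.1) = (fun t => ξ t t) ∘ Prod.fst := rfl
    rw [this]
    refine (MeasurePreserving.integrable_comp ?_ hdiagint.aestronglyMeasurable).2 hdiagint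
    exact ⟨measurable_fst, by simp⟩
  have hdsnd : Integrable (fun p : ℝ × ℝ => ξ p.2 p.2) (I01.prod I01) := by
    have : (fun p : ℝ × ℝ => ξ p.2 p.2) = (fun t => ξ t t) ∘ Prod.snd := rfl
    rw [this]
    refine (MeasurePreserving.integrable_comp ?_ hdiagint.aestronglyMeasurable).2 hdiagint
    exact ⟨measurable_snd, by simp⟩
  -- integrals of marginal compositions
  have hζfst_int : (∫ p, ζ p.1 ∂(I01.prod I01)) = Z := by
    rw [integral_prod _ hζfst]
    simp [hZ]
  have hζsnd_int : (∫ p, ζ p.2 ∂(I01.prod I01)) = Z := by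
    rw [integral_prod _ hζsnd]
    simp [hZ]
  have hdfst_int : (∫ p, ξ p.1 p.1 ∂(I01.prod I01)) = D := by
    rw [integral_prod _ hdfst]
    simp [hDdef]
  have hdsnd_int : (∫ p, ξ p.2 p.2 ∂(I01.prod I01)) = D := by
    rw [integral_prod _ hdsnd]
    simp [hDdef]
  -- FIRST BOUND : Z^2 ≤ X, via the kernel (s,t) ↦ ξ s t + y ζ s + y ζ t + y² with y = -Z
  have hquad : ∀ y : ℝ, 0 ≤ X + 2 * y * Z + y ^ 2 := by
    intro y
    set g : ℝ → ℝ → ℝ := fun s t => ξ s t + y * ζ s + y * ζ t + y ^ 2 with hg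
    have hgm : Measurable (uncurry g) := by
      apply Measurable.add
      apply Measurable.add
      apply Measurable.add
      · exact hmξ
      · exact (hmζ.comp measurable_fst).const_mul y
      · exact (hmζ.comp measurable_snd).const_mul y
      · exact measurable_const
    have hgint : Integrable (uncurry g) (I01.prod I01) := by
      have : uncurry g = fun p : ℝ × ℝ =>
          uncurry ξ p + y * ζ p.1 + y * ζ p.2 + y ^ 2 := rfl
      rw [this]
      exact (((hξint.add (hζfst.const_mul y)).add (hζsnd.const_mul y)).add
        (integrable_const _))
    have hgdiag : Integrable (fun t => g t t) I01 := by
      have : (fun t => g t t) = fun t => ξ t t + y * ζ t + y * ζ t + y ^ 2 := rfl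
      rw [this]
      exact ((hdiagint.add (hζint.const_mul y)).add (hζint.const_mul y)).add
        (integrable_const _)
    have hgpsd : ∀ (n : ℕ) (ts : Fin n → ℝ), (∀ i, ts i ∈ Icc (0:ℝ) 1) →
        0 ≤ ∑ i, ∑ j, g (ts i) (ts j) := by
      intro n ts hts
      have hM := hpos n ts hts
      have hqf := posSemidef_double_sum hM
        (Sum.elim (fun _ : Fin n => (1 : ℝ)) (fun _ : Unit => (n : ℝ) * y))
      rw [Fintype.sum_sum_type] at hqf
      simp only [Fintype.sum_sum_type, Sum.elim_inl, Sum.elim_inr, Matrix.of_apply,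
        Finset.univ_unique, Finset.sum_singleton, one_mul, mul_one,
        ← Finset.sum_mul, ← Finset.mul_sum, Finset.sum_add_distrib] at hqf
      have hexp : ∑ i, ∑ j, g (ts i) (ts j)
          = (∑ i, ∑ j, ξ (ts i) (ts j)) + (n : ℝ) * y * (∑ i, ζ (ts i))
            + (n : ℝ) * y * (∑ j, ζ (ts j)) + (n : ℝ) ^ 2 * y ^ 2 := by
        simp only [hg, Finset.sum_add_distrib, Finset.sum_const, Finset.card_univ,
          Fintype.card_fin, nsmul_eq_mul, ← Finset.mul_sum, ← Finset.sum_mul]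
        ring
      rw [hexp]
      nlinarith [hqf]
    have h0 := kernel_integral_nonneg hgm hgint hgdiag hgpsd
    have hval : (∫ p, uncurry g p ∂(I01.prod I01)) = X + 2 * y * Z + y ^ 2 := by
      have heq : uncurry g = fun p : ℝ × ℝ =>
          uncurry ξ p + y * ζ p.1 + y * ζ p.2 + y ^ 2 := rfl
      have i1 : Integrable (fun p : ℝ × ℝ => uncurry ξ p + y * ζ p.1) (I01.prod I01) :=
        hξint.add (hζfst.const_mul y)
      have i2 : Integrable (fun p : ℝ × ℝ => uncurry ξ p + y * ζ p.1 + y * ζ p.2)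
          (I01.prod I01) := i1.add (hζsnd.const_mul y)
      rw [heq, integral_add i2 (integrable_const _), integral_add i1 (hζsnd.const_mul y),
        integral_add hξint (hζfst.const_mul y),
        integral_const_mul y, integral_const_mul y, hζfst_int, hζsnd_int, integral_const]
      rw [← hXP]
      simp
      ring
    rw [hval] at h0
    exact h0
  have hbound1 : Z ^ 2 ≤ X := by
    have := hquad (-Z)
    nlinarith [this]
  -- SECOND BOUND : X ≤ D, via the kernel (s,t) ↦ (ξ s s + ξ t t)/2 - ξ s t
  have hbound2 : X ≤ D := by
    set g : ℝ → ℝ → ℝ := fun s t => (ξ s s + ξ t t) / 2 - ξ s t with hg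
    have hgm : Measurable (uncurry g) := by
      apply Measurable.sub
      · exact ((hmdiag.comp measurable_fst).add (hmdiag.comp measurable_snd)).div_const 2
      · exact hmξ
    have hgint : Integrable (uncurry g) (I01.prod I01) := by
      have : uncurry g = fun p : ℝ × ℝ =>
          (ξ p.1 p.1 + ξ p.2 p.2) / 2 - uncurry ξ p := rfl
      rw [this]
      exact ((hdfst.add hdsnd).div_const 2).sub hξint
    have hgdiag : Integrable (fun t => g t t) I01 := by
      have : (fun t => g t t) = fun t => (ξ t t + ξ t t) / 2 - ξ t t := rfl
      rw [this]
      exact ((hdiagint.add hdiagint).div_const 2).sub hdiagint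
    have hgpsd : ∀ (n : ℕ) (ts : Fin n → ℝ), (∀ i, ts i ∈ Icc (0:ℝ) 1) →
        0 ≤ ∑ i, ∑ j, g (ts i) (ts j) := by
      intro n ts hts
      have hM := hpos n ts hts
      -- each pairwise quadratic form with x = e_i - e_j is nonneg
      have hpair : ∀ i j : Fin n,
          0 ≤ ξ (ts i) (ts i) + ξ (ts j) (ts j) - ξ (ts i) (ts j) - ξ (ts j) (ts i) := by
        intro i j
        have hM2 := hpos 2 ![ts i, ts j] (by
          intro k
          fin_cases k <;> simpa using hts _)
        have hq := posSemidef_double_sum hM2 (Sum.elim ![1, -1] 0)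
        simp [Fintype.sum_sum_type, Fin.sum_univ_succ, Matrix.of_apply] at hq
        linarith
      have hsum : ∑ i, ∑ j, g (ts i) (ts j)
          = (1 / 2) * ∑ i, ∑ j, (ξ (ts i) (ts i) + ξ (ts j) (ts j)
              - ξ (ts i) (ts j) - ξ (ts j) (ts i)) := by
        have hswap : ∑ i, ∑ j, ξ (ts j) (ts i) = ∑ i, ∑ j, ξ (ts i) (ts j) :=
          Finset.sum_comm

        have e1 : ∑ i : Fin n, ∑ j : Fin n, g (ts i) (ts j)
            = (∑ i : Fin n, ∑ j : Fin n, ((ξ (ts i) (ts i) + ξ (ts j) (ts j)) / 2))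
              - ∑ i, ∑ j, ξ (ts i) (ts j) := by
          simp only [hg, Finset.sum_sub_distrib]
        have e2 : ∑ i : Fin n, ∑ j : Fin n, (ξ (ts i) (ts i) + ξ (ts j) (ts j)
              - ξ (ts i) (ts j) - ξ (ts j) (ts i))
            = (∑ i : Fin n, ∑ j : Fin n, (ξ (ts i) (ts i) + ξ (ts j) (ts j)))
              - 2 * ∑ i, ∑ j, ξ (ts i) (ts j) := by
          simp only [Finset.sum_sub_distrib]
          rw [hswap]
          ring
        have e3 : ∑ i : Fin n, ∑ j : Fin n, ((ξ (ts i) (ts i) + ξ (ts j) (ts j)) / 2)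
            = (1 / 2) * ∑ i : Fin n, ∑ j : Fin n, (ξ (ts i) (ts i) + ξ (ts j) (ts j)) := by
          rw [Finset.mul_sum]
          refine Finset.sum_congr rfl fun i _ => ?_
          rw [Finset.mul_sum]
          refine Finset.sum_congr rfl fun j _ => ?_
          ring
        rw [e1, e2, e3]
        ring
      rw [hsum]
      have hnn : 0 ≤ ∑ i, ∑ j, (ξ (ts i) (ts i) + ξ (ts j) (ts j)
          - ξ (ts i) (ts j) - ξ (ts j) (ts i)) :=
        Finset.sum_nonneg fun i _ => Finset.sum_nonneg fun j _ => hpair i j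
      linarith
    have h0 := kernel_integral_nonneg hgm hgint hgdiag hgpsd
    have hval : (∫ p, uncurry g p ∂(I01.prod I01)) = D - X := by
      have heq : uncurry g = fun p : ℝ × ℝ =>
          (ξ p.1 p.1 + ξ p.2 p.2) / 2 - uncurry ξ p := rfl
      have i1 : Integrable (fun p : ℝ × ℝ => ξ p.1 p.1 + ξ p.2 p.2) (I01.prod I01) :=
        hdfst.add hdsnd
      have i2 : Integrable (fun p : ℝ × ℝ => (ξ p.1 p.1 + ξ p.2 p.2) / 2) (I01.prod I01) :=
        i1.div_const 2
      rw [heq, integral_sub i2 hξint, integral_div, integral_add hdfst hdsnd,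
        hdfst_int, hdsnd_int, ← hXP]
      ring
    rw [hval] at h0
    linarith
  -- THIRD BOUND : X ≤ 1/(1-r)^2
  have hr1 : 0 < 1 - r := by linarith
  have hbound3 : X ≤ 1 / (1 - r) ^ 2 := by
    have hXZ : (1 - r) * X ≤ Z := by
      -- X ≤ D = r X + Z
      nlinarith [hbound2, hDXZ]
    rcases le_or_gt X 0 with hX0 | hX0
    · have : (0:ℝ) < 1 / (1 - r) ^ 2 := by positivity
      linarith
    · have hZpos : 0 < Z := lt_of_lt_of_le (by positivity) hXZ
      have hsq : ((1 - r) * X) ^ 2 ≤ Z ^ 2 := by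
        apply pow_le_pow_left₀ (by positivity) hXZ
      rw [le_div_iff₀ (by positivity)]
      nlinarith [hbound1, hsq, hX0]
  exact ⟨hbound1, le_min hbound2 hbound3⟩
end

section
/- Let r < 1 and u, v, w ∈ ℝ, and set α = v + w, β = r·w − u. For an equilibrium moment (ξ, ζ) on [0,1], define V(ξ, ζ) = u·∬ ξ(s,t) ds dt + v·∫₀¹ ξ(t,t) dt + w·∫₀¹ ζ(t) dt, and let V_tg(m) = (α·m − β·m²)/(1 − r·m)² for m ∈ [0,1]. Then: (a) V(ξ, ζ) ≤ max_{m ∈ [0,1]} V_tg(m) for every equilibrium moment (ξ, ζ); and (b) for each m ∈ [0,1], the pair given by ξ(s,t) = 1_{[0,m]}(s)·1_{[0,m]}(t)/(1 − r·m)² and ζ(t) = 1_{[0,m]}(t)/(1 − r·m) is an equilibrium moment with V(ξ, ζ) = V_tg(m). Consequently, the supremum of V over all equilibrium moments equals max_{m ∈ [0,1]} V_tg(m) and is attained. -/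
open MeasureTheory Set

/-- The designer's objective
`V(ξ, ζ) = u·∬ ξ + v·∫ ξ(t,t) dt + w·∫ ζ`. -/
noncomputable def desV (u v w : ℝ) (ξ : ℝ → ℝ → ℝ) (ζ : ℝ → ℝ) : ℝ :=
  u * (∫ s, ∫ t, ξ s t ∂I01 ∂I01) + v * (∫ t, ξ t t ∂I01) + w * (∫ t, ζ t ∂I01)

/-- The value `V_tg(m) = (α·m − β·m²)/(1 − r·m)²` of targeted disclosure to a set of
agents of measure `m`. -/
noncomputable def Vtg (r α β m : ℝ) : ℝ := (α * m - β * m ^ 2) / (1 - r * m) ^ 2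

/-- The equilibrium moment induced by targeted disclosure to `[0, m]`:
`ξ s t = 1_{[0,m]}(s)·1_{[0,m]}(t)/(1 − r·m)²`. -/
noncomputable def tgXi (r m : ℝ) : ℝ → ℝ → ℝ := fun s t =>
  (Icc (0:ℝ) m).indicator (fun _ => (1:ℝ)) s *
    (Icc (0:ℝ) m).indicator (fun _ => (1:ℝ)) t / (1 - r * m) ^ 2

/-- The action-state covariance induced by targeted disclosure to `[0, m]`:
`ζ t = 1_{[0,m]}(t)/(1 − r·m)`. -/
noncomputable def tgZeta (r m : ℝ) : ℝ → ℝ := fun t =>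
  (Icc (0:ℝ) m).indicator (fun _ => (1:ℝ)) t / (1 - r * m)

instance I01_prob : IsProbabilityMeasure I01 :=
  ⟨by rw [I01, Measure.restrict_apply_univ, Real.volume_Icc]; norm_num⟩

lemma I01_compl_Icc : I01 (Icc (0:ℝ) 1)ᶜ = 0 := by
  rw [I01, Measure.restrict_apply measurableSet_Icc.compl, compl_inter_self]
  simp

lemma denom_pos {r m : ℝ} (hr : r < 1) (hm : m ∈ Icc (0:ℝ) 1) : 0 < 1 - r * m := by
  rcases le_or_gt r 0 with h | h
  · nlinarith [hm.1, hm.2]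
  · nlinarith [hm.1, hm.2]

lemma ind_int {m : ℝ} (hm : m ∈ Icc (0:ℝ) 1) :
    ∫ t, (Icc (0:ℝ) m).indicator (fun _ => (1:ℝ)) t ∂I01 = m := by
  rw [MeasureTheory.integral_indicator_const (1:ℝ) measurableSet_Icc]
  rw [I01, Measure.real, Measure.restrict_apply measurableSet_Icc]
  rw [Set.inter_eq_left.mpr (Icc_subset_Icc le_rfl hm.2), Real.volume_Icc]
  simp [hm.1]

lemma ind_meas (m : ℝ) : Measurable ((Icc (0:ℝ) m).indicator (fun _ => (1:ℝ))) :=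
  measurable_const.indicator measurableSet_Icc

lemma ind_integrable (m : ℝ) : Integrable ((Icc (0:ℝ) m).indicator (fun _ => (1:ℝ))) I01 :=
  (integrable_const (1:ℝ)).indicator measurableSet_Icc

lemma ind_sq (m x : ℝ) : ((Icc (0:ℝ) m).indicator (fun _ => (1:ℝ)) x) ^ 2
    = (Icc (0:ℝ) m).indicator (fun _ => (1:ℝ)) x := by
  by_cases hx : x ∈ Icc (0:ℝ) m <;> simp [hx]

lemma ind_mul_self (m x : ℝ) : ((Icc (0:ℝ) m).indicator (fun _ => (1:ℝ)) x) *
    (Icc (0:ℝ) m).indicator (fun _ => (1:ℝ)) x = (Icc (0:ℝ) m).indicator (fun _ => (1:ℝ)) x := by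
  by_cases hx : x ∈ Icc (0:ℝ) m <;> simp [hx]


lemma pi_map_pair {N : ℕ} {i j : Fin N} (hij : i ≠ j) :
    (Measure.pi fun _ : Fin N => I01).map (fun t => (t i, t j)) = I01.prod I01 := by
  classical
  refine (Measure.prod_eq fun s t hs ht => ?_).symm
  rw [Measure.map_apply ((measurable_pi_apply i).prodMk (measurable_pi_apply j)) (hs.prod ht)]
  have hpre : (fun (f : Fin N → ℝ) => (f i, f j)) ⁻¹' (s ×ˢ t)
      = Set.pi univ (fun k => if k = i then s else if k = j then t else univ) := by
    ext f
    simp only [mem_preimage, mem_prod, Set.mem_pi, mem_univ, forall_true_left]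
    constructor
    · rintro ⟨h1, h2⟩ k
      by_cases hki : k = i
      · subst hki; simp [h1]
      · by_cases hkj : k = j
        · subst hkj; simp [hki, h2]
        · simp [hki, hkj]
    · intro hk
      refine ⟨?_, ?_⟩
      · have := hk i; simpa using this
      · have := hk j; simpa [hij.symm] using this
  rw [hpre, Measure.pi_pi]
  have hf : ∀ k : Fin N, I01 (if k = i then s else if k = j then t else univ)
      = if k = i then I01 s else if k = j then I01 t else 1 := by
    intro k
    by_cases hki : k = i
    · simp [hki]
    · by_cases hkj : k = j
      · subst hkj; simp [hki, hij.symm]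
      · simp [hki, hkj, measure_univ]
  simp only [hf]
  set f : Fin N → ENNReal := fun k => if k = i then I01 s else if k = j then I01 t else 1 with hfd
  calc (∏ k, f k) = f i * ∏ k ∈ Finset.univ.erase i, f k :=
        (Finset.mul_prod_erase Finset.univ f (Finset.mem_univ i)).symm
    _ = f i * (f j * ∏ k ∈ (Finset.univ.erase i).erase j, f k) := by
        rw [Finset.mul_prod_erase _ f (Finset.mem_erase.mpr ⟨hij.symm, Finset.mem_univ j⟩)]
    _ = I01 s * I01 t := by
        rw [Finset.prod_eq_one]
        · simp [hfd, hij.symm]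
        · intro k hk
          rcases Finset.mem_erase.mp hk with ⟨hkj, hk'⟩
          rcases Finset.mem_erase.mp hk' with ⟨hki, _⟩
          simp [hfd, hki, hkj]

lemma key_nonneg (h : ℝ × ℝ → ℝ) (hmeas : Measurable h)
    (hint : Integrable h (I01.prod I01))
    (hdiag : Integrable (fun t => h (t, t)) I01)
    (hpsd : ∀ (N : ℕ) (ts : Fin N → ℝ), (∀ i, ts i ∈ Icc (0:ℝ) 1) →
      0 ≤ ∑ i : Fin N, ∑ j : Fin N, h (ts i, ts j)) :
    0 ≤ ∫ p, h p ∂(I01.prod I01) := by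
  classical
  set H := ∫ p, h p ∂(I01.prod I01) with hH
  set Dh := ∫ t, h (t, t) ∂I01 with hDh
  have claim : ∀ N : ℕ, 0 ≤ ((N:ℝ)+2) * (((N:ℝ)+1) * H + Dh) := by
    intro N
    set π : Measure (Fin (N+2) → ℝ) := Measure.pi fun _ => I01 with hπ
    have hpair : ∀ i j : Fin (N+2), i ≠ j →
        Integrable (fun t : Fin (N+2) → ℝ => h (t i, t j)) π ∧
          ∫ t, h (t i, t j) ∂π = H := by
      intro i j hij
      have hmap := pi_map_pair (N := N+2) hij
      have hgm : Measurable (fun t : Fin (N+2) → ℝ => (t i, t j)) :=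
        (measurable_pi_apply i).prodMk (measurable_pi_apply j)
      have hsm : AEStronglyMeasurable h (π.map (fun t => (t i, t j))) := by
        rw [hmap]; exact hint.aestronglyMeasurable
      constructor
      · have := (integrable_map_measure hsm hgm.aemeasurable).mp (by rw [hmap]; exact hint)
        exact this
      · have := integral_map (μ := π) hgm.aemeasurable hsm
        rw [hmap] at this
        exact this.symm
    have hdiagterm : ∀ i : Fin (N+2),
        Integrable (fun t : Fin (N+2) → ℝ => h (t i, t i)) π ∧
          ∫ t, h (t i, t i) ∂π = Dh := by
      intro i
      obtain ⟨j, hij⟩ : ∃ j : Fin (N+2), i ≠ j := by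
        obtain ⟨j, hj⟩ := exists_ne i
        exact ⟨j, hj.symm⟩
      have hmap := pi_map_pair (N := N+2) hij
      have hgm : Measurable (fun t : Fin (N+2) → ℝ => (t i, t j)) :=
        (measurable_pi_apply i).prodMk (measurable_pi_apply j)
      have hdm : Measurable (fun p : ℝ × ℝ => h (p.1, p.1)) :=
        hmeas.comp (measurable_fst.prodMk measurable_fst)
      have hprodint : Integrable (fun p : ℝ × ℝ => h (p.1, p.1)) (I01.prod I01) := by
        have : (fun p : ℝ × ℝ => h (p.1, p.1))
            = fun p : ℝ × ℝ => (fun t => h (t, t)) p.1 * (fun _ : ℝ => (1:ℝ)) p.2 := by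
          funext p; simp
        rw [this]
        exact hdiag.mul_prod (integrable_const 1)
      have hsm : AEStronglyMeasurable (fun p : ℝ × ℝ => h (p.1, p.1))
          (π.map (fun t => (t i, t j))) := by
        rw [hmap]; exact hprodint.aestronglyMeasurable
      have hIprod : ∫ p, h (p.1, p.1) ∂(I01.prod I01) = Dh := by
        have h2 := integral_prod_mul (μ := I01) (ν := I01) (fun t : ℝ => h (t, t))
          (fun _ : ℝ => (1:ℝ))
        simpa using h2
      constructor
      · exact (integrable_map_measure hsm hgm.aemeasurable).mp (by rw [hmap]; exact hprodint)
      · have := integral_map (μ := π) hgm.aemeasurable hsm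
        rw [hmap, hIprod] at this
        exact this.symm
    have hterm : ∀ i j : Fin (N+2),
        Integrable (fun t : Fin (N+2) → ℝ => h (t i, t j)) π := by
      intro i j
      by_cases hij : i = j
      · subst hij; exact (hdiagterm i).1
      · exact (hpair i j hij).1
    have htermval : ∀ i j : Fin (N+2),
        ∫ t, h (t i, t j) ∂π = if i = j then Dh else H := by
      intro i j
      by_cases hij : i = j
      · subst hij; simp [(hdiagterm i).2]
      · simp [hij, (hpair i j hij).2]
    have hnn : 0 ≤ ∫ t, (∑ i : Fin (N+2), ∑ j : Fin (N+2), h (t i, t j)) ∂π := by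
      refine integral_nonneg_of_ae ?_
      have hae : ∀ᵐ t ∂π, ∀ i : Fin (N+2), t i ∈ Icc (0:ℝ) 1 := by
        rw [ae_all_iff]
        intro i
        rw [ae_iff]
        have heq : {t : Fin (N+2) → ℝ | ¬ t i ∈ Icc (0:ℝ) 1}
            = Function.eval i ⁻¹' (Icc (0:ℝ) 1)ᶜ := by
          ext t; simp [Function.eval]
        rw [heq]
        exact Measure.pi_eval_preimage_null _ I01_compl_Icc
      filter_upwards [hae] with t ht
      exact hpsd (N+2) (fun i => t i) ht
    have hsumval : ∫ t, (∑ i : Fin (N+2), ∑ j : Fin (N+2), h (t i, t j)) ∂π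
        = ((N:ℝ)+2) * (((N:ℝ)+1) * H + Dh) := by
      rw [integral_finset_sum _ (fun i _ => integrable_finset_sum _ (fun j _ => hterm i j))]
      have : ∀ i : Fin (N+2), ∫ t, (∑ j : Fin (N+2), h (t i, t j)) ∂π
          = ((N:ℝ)+1) * H + Dh := by
        intro i
        rw [integral_finset_sum _ (fun j _ => hterm i j)]
        have : ∀ j : Fin (N+2), ∫ t, h (t i, t j) ∂π
            = H + (if i = j then Dh - H else 0) := by
          intro j
          rw [htermval i j]
          by_cases hij : i = j <;> simp [hij]
        simp only [this]
        rw [Finset.sum_add_distrib, Finset.sum_const, Finset.sum_ite_eq]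
        simp [Finset.card_univ]
        push_cast
        ring
      simp only [this]
      rw [Finset.sum_const, Finset.card_univ]
      simp
      push_cast
      ring
    rw [hsumval] at hnn
    exact hnn
  by_contra hneg
  push_neg at hneg
  obtain ⟨N, hN⟩ := exists_nat_gt (Dh / (-H))
  have h1 : Dh < (N:ℝ) * (-H) := (div_lt_iff₀ (by linarith)).mp hN
  have h2 := claim N
  nlinarith [h2, h1, hneg]

lemma vtg_cont (r α β : ℝ) (hr : r < 1) : ContinuousOn (Vtg r α β) (Icc (0:ℝ) 1) := by
  apply ContinuousOn.div
  · exact (Continuous.continuousOn (by continuity))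
  · exact (Continuous.continuousOn (by continuity))
  · intro m hm
    exact pow_ne_zero 2 (ne_of_gt (denom_pos hr hm))

lemma vtg_bdd (r α β : ℝ) (hr : r < 1) : BddAbove (Vtg r α β '' Icc (0:ℝ) 1) :=
  ((isCompact_Icc.image_of_continuousOn (vtg_cont r α β hr))).bddAbove

lemma vtg_le_sSup (r α β : ℝ) (hr : r < 1) {m : ℝ} (hm : m ∈ Icc (0:ℝ) 1) :
    Vtg r α β m ≤ sSup (Vtg r α β '' Icc (0:ℝ) 1) :=
  le_csSup (vtg_bdd r α β hr) (mem_image_of_mem _ hm)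

lemma final_bound (r u v w x z : ℝ) (hr : r < 1) (h1 : z ^ 2 ≤ x) (h2 : x ≤ r * x + z) :
    (u + r * v) * x + (v + w) * z ≤ sSup (Vtg r (v + w) (r * w - u) '' Icc (0:ℝ) 1) := by
  have hz0 : 0 ≤ z := by nlinarith [sq_nonneg z]
  have hzb : (1 - r) * z ≤ 1 := by
    rcases eq_or_lt_of_le hz0 with hz | hz
    · nlinarith
    · nlinarith [h1, h2]
  have hrz : 0 < 1 + r * z := by
    rcases le_or_gt 0 r with h | h
    · nlinarith
    · nlinarith
  set m := z / (1 + r * z) with hmdef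
  have hm : m ∈ Icc (0:ℝ) 1 := by
    constructor
    · exact div_nonneg hz0 (le_of_lt hrz)
    · rw [div_le_one hrz]; nlinarith
  have hVm : Vtg r (v + w) (r * w - u) m = (u + r * v) * z ^ 2 + (v + w) * z := by
    rw [Vtg, hmdef]
    have h1m : 1 - r * (z / (1 + r * z)) = 1 / (1 + r * z) := by
      field_simp
      ring
    rw [h1m]
    field_simp
    rw [div_eq_iff (by nlinarith)]
    ring
  rcases le_or_gt (u + r * v) 0 with hc | hc
  · have : (u + r * v) * x + (v + w) * z ≤ Vtg r (v + w) (r * w - u) m := by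
      rw [hVm]
      nlinarith [mul_le_mul_of_nonpos_left h1 hc]
    exact this.trans (vtg_le_sSup _ _ _ hr hm)
  · have hx : (1 - r) * x ≤ z := by linarith
    have hr1 : (0:ℝ) < 1 - r := by linarith
    have hs1 : (1 - r) * ((u + r * v) * x) ≤ (u + r * v) * z := by nlinarith
    rcases le_or_gt 0 ((u + r * v) + (v + w) * (1 - r)) with hA | hA
    · have hend : (u + r * v) * x + (v + w) * z ≤ Vtg r (v + w) (r * w - u) 1 := by
        have hVe : Vtg r (v + w) (r * w - u) 1 = ((v + w) - (r * w - u)) / (1 - r) ^ 2 := by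
          rw [Vtg]; ring_nf
        rw [hVe, le_div_iff₀ (pow_pos hr1 2)]
        have hzz : (1 - r) * z * ((u + r * v) + (v + w) * (1 - r))
            ≤ (u + r * v) + (v + w) * (1 - r) := by
          nlinarith [mul_nonneg hr1.le hz0]
        nlinarith [hs1, hzz, mul_le_mul_of_nonneg_left hs1 hr1.le]
      exact hend.trans (vtg_le_sSup _ _ _ hr (by norm_num))
    · have hend : (u + r * v) * x + (v + w) * z ≤ Vtg r (v + w) (r * w - u) 0 := by
        have hVe : Vtg r (v + w) (r * w - u) 0 = 0 := by simp [Vtg]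
        rw [hVe]
        nlinarith [hs1, mul_nonpos_of_nonneg_of_nonpos hz0 hA.le]
      exact hend.trans (vtg_le_sSup _ _ _ hr (by norm_num))

section
variable {r : ℝ} {ξ : ℝ → ℝ → ℝ} {ζ : ℝ → ℝ}

lemma two_point (hpos : ∀ (n : ℕ) (ts : Fin n → ℝ), (∀ i, ts i ∈ Icc (0:ℝ) 1) →
    (Matrix.of fun i j : Fin n ⊕ Unit =>
      match i, j with
      | Sum.inl a, Sum.inl b => ξ (ts a) (ts b)
      | Sum.inl a, Sum.inr _ => ζ (ts a)
      | Sum.inr _, Sum.inl b => ζ (ts b)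
      | Sum.inr _, Sum.inr _ => (1 : ℝ)).PosSemidef)
    {s t : ℝ} (hs : s ∈ Icc (0:ℝ) 1) (ht : t ∈ Icc (0:ℝ) 1) :
    2 * ξ s t ≤ ξ s s + ξ t t := by
  have h2 := hpos 2 ![s, t] (by intro i; fin_cases i <;> simpa)
  have hq := h2.dotProduct_mulVec_nonneg (Sum.elim ![1, -1] 0)
  simp only [dotProduct, Matrix.mulVec, Fintype.sum_sum_type, Matrix.of_apply,
    star_trivial, Fin.sum_univ_two, Finset.univ_unique, Finset.sum_const, Finset.card_univ,
    Fintype.card_unit, one_smul, Sum.elim_inl, Sum.elim_inr, Matrix.cons_val_zero,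
    Matrix.cons_val_one, Matrix.head_cons, Pi.zero_apply, Finset.sum_singleton,
    mul_zero, zero_mul, smul_zero, add_zero, smul_eq_mul] at hq
  have hsym := h2.1.apply (Sum.inl 0) (Sum.inl 1)
  simp only [Matrix.of_apply, star_trivial, Matrix.cons_val_zero, Matrix.cons_val_one,
    Matrix.head_cons] at hsym
  linarith [hq, hsym]

lemma n_point (hpos : ∀ (n : ℕ) (ts : Fin n → ℝ), (∀ i, ts i ∈ Icc (0:ℝ) 1) →
    (Matrix.of fun i j : Fin n ⊕ Unit =>
      match i, j with
      | Sum.inl a, Sum.inl b => ξ (ts a) (ts b)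
      | Sum.inl a, Sum.inr _ => ζ (ts a)
      | Sum.inr _, Sum.inl b => ζ (ts b)
      | Sum.inr _, Sum.inr _ => (1 : ℝ)).PosSemidef)
    (N : ℕ) (ts : Fin N → ℝ) (hts : ∀ i, ts i ∈ Icc (0:ℝ) 1) :
    0 ≤ ∑ i : Fin N, ∑ j : Fin N, (ξ (ts i) (ts j) - ζ (ts i) * ζ (ts j)) := by
  have h2 := hpos N ts hts
  set S := ∑ i, ζ (ts i) with hS
  have hq := h2.dotProduct_mulVec_nonneg (Sum.elim (fun _ : Fin N => (1:ℝ)) (fun _ => -S))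
  simp only [dotProduct, Matrix.mulVec, Fintype.sum_sum_type, Matrix.of_apply,
    star_trivial, Sum.elim_inl, Sum.elim_inr, Finset.univ_unique, Finset.sum_const,
    Finset.card_singleton, one_smul, mul_one, one_mul] at hq
  have hsum : ∑ i : Fin N, ∑ j : Fin N, (ξ (ts i) (ts j) - ζ (ts i) * ζ (ts j))
      = (∑ i : Fin N, ∑ j : Fin N, ξ (ts i) (ts j)) - S * S := by
    rw [Finset.sum_mul_sum, ← Finset.sum_sub_distrib]
    exact Finset.sum_congr rfl fun i _ => by rw [← Finset.sum_sub_distrib]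
  rw [hsum]
  rw [Finset.sum_add_distrib] at hq
  have e1 : ∑ x : Fin N, ζ (ts x) * -S = -(S * S) := by
    rw [← Finset.sum_mul, ← hS]; ring
  rw [e1, ← hS] at hq
  nlinarith [hq]


end

lemma partA (r u v w : ℝ) (hr : r < 1) (ξ : ℝ → ℝ → ℝ) (ζ : ℝ → ℝ)
    (hEq : IsEqMoment r ξ ζ) :
    desV u v w ξ ζ ≤ sSup (Vtg r (v + w) (r * w - u) '' Icc (0:ℝ) 1) := by
  obtain ⟨hmξ, hmζ, hξ2, hζ2, hob, hpos⟩ := hEq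
  have hmem : ∀ᵐ t ∂I01, t ∈ Icc (0:ℝ) 1 := by
    rw [I01]; exact ae_restrict_mem measurableSet_Icc
  have hmξ' : Measurable (fun p : ℝ × ℝ => ξ p.1 p.2) := hmξ
  have hξ1 : Integrable (fun p : ℝ × ℝ => ξ p.1 p.2) (I01.prod I01) :=
    ((memLp_two_iff_integrable_sq hmξ'.aestronglyMeasurable).mpr hξ2).integrable one_le_two
  have hζ1 : Integrable ζ I01 :=
    ((memLp_two_iff_integrable_sq hmζ.aestronglyMeasurable).mpr hζ2).integrable one_le_two
  set g : ℝ → ℝ := fun t => ∫ t', ξ t t' ∂I01 with hgdef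
  have hg : Integrable g I01 := hξ1.integral_prod_left
  set d : ℝ → ℝ := fun t => ξ t t with hddef
  have hd_ae : d =ᵐ[I01] fun t => r * g t + ζ t := hmem.mono fun t ht => hob t ht
  have hd_int : Integrable d I01 := ((hg.const_mul r).add hζ1).congr hd_ae.symm
  set X : ℝ := ∫ s, g s ∂I01 with hXdef
  set Z : ℝ := ∫ t, ζ t ∂I01 with hZdef
  set D : ℝ := ∫ t, d t ∂I01 with hDdef
  have hD : D = r * X + Z := by
    rw [hDdef, integral_congr_ae hd_ae, integral_add (hg.const_mul r) hζ1,
      integral_const_mul]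
  have hXD : X ≤ D := by
    have hslice : ∀ᵐ s ∂I01, Integrable (fun t => ξ s t) I01 := hξ1.prod_right_ae
    have step1 : ∀ᵐ s ∂I01, g s ≤ (d s + D) / 2 := by
      filter_upwards [hmem, hslice] with s hs hint
      have hptwise : ∀ᵐ t ∂I01, ξ s t ≤ (d s + d t) / 2 := by
        filter_upwards [hmem] with t ht
        have := two_point hpos hs ht
        simp only [hddef]
        linarith
      have hrhs_int : Integrable (fun t => (d s + d t) / 2) I01 :=
        ((integrable_const (d s)).add hd_int).div_const 2
      have := integral_mono_ae hint hrhs_int hptwise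
      have hrhs : ∫ t, (d s + d t) / 2 ∂I01 = (d s + D) / 2 := by
        rw [integral_div, integral_add (integrable_const (d s)) hd_int, integral_const]
        simp [hDdef]
      rw [hrhs] at this
      exact this
    have h2 := integral_mono_ae hg ((hd_int.add (integrable_const D)).div_const 2) step1
    have h2' : X ≤ ∫ s, (d s + D) / 2 ∂I01 := h2
    have hthis : ∫ s, (d s + D) / 2 ∂I01 = (D + D) / 2 := by
      rw [integral_div, integral_add hd_int (integrable_const D), integral_const]
      simp [hDdef]
    rw [hthis] at h2'
    linarith [h2']
  have hζζ_int : Integrable (fun p : ℝ × ℝ => ζ p.1 * ζ p.2) (I01.prod I01) :=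
    hζ1.mul_prod hζ1
  have hZX : Z ^ 2 ≤ X := by
    have hX2 : X = ∫ p, ξ p.1 p.2 ∂(I01.prod I01) := by
      rw [hXdef]
      exact integral_integral hξ1
    have hkey := key_nonneg (fun p => ξ p.1 p.2 - ζ p.1 * ζ p.2)
      (hmξ'.sub ((hmζ.comp measurable_fst).mul (hmζ.comp measurable_snd)))
      (hξ1.sub hζζ_int)
      (by
        have : (fun t : ℝ => ξ t t - ζ t * ζ t) = fun t => d t - ζ t ^ 2 := by
          funext t; simp [hddef]; ring
        simpa [this, Pi.sub_def] using hd_int.sub (hζ2.congr (by filter_upwards with t; ring_nf)))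
      (fun N ts hts => n_point hpos N ts hts)
    rw [integral_sub hξ1 hζζ_int, integral_prod_mul] at hkey
    rw [hX2]
    nlinarith [hkey]
  have hV : desV u v w ξ ζ = (u + r * v) * X + (v + w) * Z := by
    rw [desV]
    have h1 : (∫ s, ∫ t, ξ s t ∂I01 ∂I01) = X := rfl
    have h2 : (∫ t, ξ t t ∂I01) = D := rfl
    rw [h1, h2, hD]
    ring
  rw [hV]
  exact final_bound r u v w X Z hr hZX (by linarith [hXD, hD.symm.le])


lemma tg_eq (r u v w m : ℝ) (hr : r < 1) (hm : m ∈ Icc (0:ℝ) 1) :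
    IsEqMoment r (tgXi r m) (tgZeta r m) ∧
      desV u v w (tgXi r m) (tgZeta r m) = Vtg r (v + w) (r * w - u) m := by
  set e := (Icc (0:ℝ) m).indicator (fun _ => (1:ℝ)) with he
  have hc : 0 < 1 - r * m := denom_pos hr hm
  have hc' : (1 - r * m) ≠ 0 := ne_of_gt hc
  have hinte : ∫ t, e t ∂I01 = m := ind_int hm
  have hxi_int : ∀ s : ℝ, (fun t => tgXi r m s t) = fun t => (e s / (1 - r*m)^2) * e t := by
    intro s; funext t; simp only [tgXi, he]; ring
  have hint1 : ∀ s : ℝ, ∫ t, tgXi r m s t ∂I01 = e s / (1 - r*m)^2 * m := by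
    intro s
    rw [hxi_int s, MeasureTheory.integral_const_mul, hinte]
  constructor
  · refine ⟨?_, ?_, ?_, ?_, ?_, ?_⟩
    · exact (((ind_meas m).comp measurable_fst).mul ((ind_meas m).comp measurable_snd)).div_const _
    · exact (ind_meas m).div_const _
    · have : (fun p : ℝ × ℝ => (tgXi r m p.1 p.2) ^ 2)
          = fun p : ℝ × ℝ => (fun s => e s / ((1 - r*m)^2)^2) p.1 * (fun t => e t) p.2 := by
        funext p; simp only [tgXi, he, div_pow, mul_pow, ind_sq]; ring
      rw [this]
      exact Integrable.mul_prod ((ind_integrable m).div_const _) (ind_integrable m)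
    · have : (fun t => (tgZeta r m t) ^ 2) = fun t => e t / (1 - r*m)^2 := by
        funext t; simp only [tgZeta, he, div_pow, ind_sq]
      rw [this]
      exact (ind_integrable m).div_const _
    · intro t ht
      rw [hint1 t]
      show e t * e t / (1 - r*m)^2 = r * (e t / (1 - r*m)^2 * m) + e t / (1 - r*m)
      rw [ind_mul_self]
      by_cases h : t ∈ Icc (0:ℝ) m
      · simp only [he, Set.indicator_of_mem h]; field_simp; ring
      · simp [he, Set.indicator_of_notMem h]
    · intro n ts hts
      set a : Fin n ⊕ Unit → ℝ := fun i => match i with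
        | Sum.inl i => e (ts i) / (1 - r * m)
        | Sum.inr _ => 1 with ha
      have hM : (Matrix.of fun i j : Fin n ⊕ Unit =>
          match i, j with
          | Sum.inl a, Sum.inl b => tgXi r m (ts a) (ts b)
          | Sum.inl a, Sum.inr _ => tgZeta r m (ts a)
          | Sum.inr _, Sum.inl b => tgZeta r m (ts b)
          | Sum.inr _, Sum.inr _ => (1 : ℝ)) = Matrix.of fun i j => a i * a j := by
        ext i j
        cases i <;> cases j <;>
          · simp only [tgXi, tgZeta, ha, Matrix.of_apply]
            try (field_simp; try ring; try exact Or.inl trivial)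
      rw [hM]
      refine Matrix.PosSemidef.of_dotProduct_mulVec_nonneg ?_ ?_
      · ext i j
        simp [Matrix.conjTranspose_apply, Matrix.of_apply, mul_comm]
      · intro x
        have : dotProduct (star x) ((Matrix.of fun i j => a i * a j).mulVec x)
            = (∑ i, a i * x i) ^ 2 := by
          simp only [star_trivial, dotProduct, Matrix.mulVec, Matrix.of_apply]
          rw [sq, Finset.sum_mul_sum]
          refine Finset.sum_congr rfl fun i _ => ?_
          rw [Finset.mul_sum]
          exact Finset.sum_congr rfl fun j _ => by ring
        rw [this]
        exact sq_nonneg _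
  · unfold desV
    have h1 : ∫ s, ∫ t, tgXi r m s t ∂I01 ∂I01 = m * m / (1 - r*m)^2 := by
      have : (fun s => ∫ t, tgXi r m s t ∂I01) = fun s => (m / (1 - r*m)^2) * e s := by
        funext s; rw [hint1 s]; ring
      rw [this, MeasureTheory.integral_const_mul, hinte]; ring
    have h2 : ∫ t, tgXi r m t t ∂I01 = m / (1 - r*m)^2 := by
      have : (fun t => tgXi r m t t) = fun t => (1 / (1 - r*m)^2) * e t := by
        funext t; simp only [tgXi, he, ind_mul_self]; ring
      rw [this, MeasureTheory.integral_const_mul, hinte]; ring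
    have h3 : ∫ t, tgZeta r m t ∂I01 = m / (1 - r*m) := by
      have : (fun t => tgZeta r m t) = fun t => (1 / (1 - r*m)) * e t := by
        funext t; simp only [tgZeta, he]; ring
      rw [this, MeasureTheory.integral_const_mul, hinte]; ring
    rw [h1, h2, h3, Vtg]
    field_simp
    ring

/-- global optimality of targeted disclosure.  Let `r < 1`,
`u v w : ℝ`, `α = v + w`, `β = r·w − u`.  Then (a) every equilibrium moment's designer
value is at most `max_{m ∈ [0,1]} V_tg(m)`; (b) for each `m ∈ [0,1]` the targeted
disclosure pair `(tgXi, tgZeta)` is an equilibrium moment with value `V_tg(m)`.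
Consequently the supremum of `V` over all equilibrium moments equals
`max_{m ∈ [0,1]} V_tg(m)` and is attained. -/
theorem targeted_disclosure_globally_optimal (r u v w : ℝ) (hr : r < 1) :
    (∀ ξ ζ, IsEqMoment r ξ ζ →
      desV u v w ξ ζ ≤ sSup (Vtg r (v + w) (r * w - u) '' Icc (0:ℝ) 1)) ∧
    (∀ m ∈ Icc (0:ℝ) 1,
      IsEqMoment r (tgXi r m) (tgZeta r m) ∧
      desV u v w (tgXi r m) (tgZeta r m) = Vtg r (v + w) (r * w - u) m) ∧
    IsGreatest {x : ℝ | ∃ ξ ζ, IsEqMoment r ξ ζ ∧ desV u v w ξ ζ = x}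
      (sSup (Vtg r (v + w) (r * w - u) '' Icc (0:ℝ) 1)) := by
  refine ⟨fun ξ ζ h => partA r u v w hr ξ ζ h,
    fun m hm => tg_eq r u v w m hr hm, ?_, ?_⟩
  · have himg : IsCompact (Vtg r (v + w) (r * w - u) '' Icc (0:ℝ) 1) :=
      isCompact_Icc.image_of_continuousOn (vtg_cont r (v + w) (r * w - u) hr)
    have hne : (Vtg r (v + w) (r * w - u) '' Icc (0:ℝ) 1).Nonempty :=
      (nonempty_Icc.mpr zero_le_one).image _
    obtain ⟨m, hm, hVm⟩ := himg.sSup_mem hne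
    exact ⟨tgXi r m, tgZeta r m, (tg_eq r u v w m hr hm).1,
      (tg_eq r u v w m hr hm).2.trans hVm⟩
  · rintro x ⟨ξ, ζ, hEq, rfl⟩
    exact partA r u v w hr ξ ζ hEq
end

section
/- Let r < 1, u, v, w ∈ ℝ, α = v + w, β = r·w − u, and m ∈ [0,1]. Define ξ̄₁ = m/(1 − r·m)², ξ̄₂ = m²/(1 − r·m)², ζ̄ = m/(1 − r·m). Then the triple (ξ̄₁, ξ̄₂, ζ̄) satisfies the symmetric obedience and positivity conditions, namely ξ̄₁ = r·ξ̄₂ + ζ̄ and ξ̄₁ ≥ ξ̄₂ ≥ ζ̄², and its designer value satisfies v·ξ̄₁ + u·ξ̄₂ + w·ζ̄ = V_tg(m), where V_tg(m) = (α·m − β·m²)/(1 − r·m)². -/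
/-! Over the denominator `(1 - r m)²`, obedience is the polynomial identity
`m = r m² + m (1 - r m)`. Substituting obedience for `ζ̄` turns the designer value into
`(v + w) ξ̄₁ - (r w - u) ξ̄₂`, and the positivity conditions come down to `m² ≤ m` on `[0, 1]`. -/

theorem div_one_sub_mul_sq_eq {K : Type*} [Field K] (r m : K) :
    m / (1 - r * m) ^ 2 = r * (m ^ 2 / (1 - r * m) ^ 2) + m / (1 - r * m) := by
  rcases eq_or_ne (1 - r * m) 0 with h | h
  · simp [h]
  · field_simp
    ring

theorem value_eq_of_obedience {R : Type*} [CommRing R] {r u v w ξ₁ ξ₂ ζ : R}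
    (h : ξ₁ = r * ξ₂ + ζ) :
    v * ξ₁ + u * ξ₂ + w * ζ = (v + w) * ξ₁ - (r * w - u) * ξ₂ := by
  linear_combination (-w) * h

theorem symmetric_eqMoment_value_general (r u v w m : ℝ)
    (hm : m ∈ Set.Icc (0:ℝ) 1) :
    m / (1 - r * m) ^ 2 = r * (m ^ 2 / (1 - r * m) ^ 2) + m / (1 - r * m) ∧
    m ^ 2 / (1 - r * m) ^ 2 ≤ m / (1 - r * m) ^ 2 ∧
    (m / (1 - r * m)) ^ 2 ≤ m ^ 2 / (1 - r * m) ^ 2 ∧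
    v * (m / (1 - r * m) ^ 2) + u * (m ^ 2 / (1 - r * m) ^ 2) + w * (m / (1 - r * m)) =
      ((v + w) * m - (r * w - u) * m ^ 2) / (1 - r * m) ^ 2 := by
  have obedience := div_one_sub_mul_sq_eq r m
  refine ⟨obedience, ?_, (div_pow m (1 - r * m) 2).le, ?_⟩
  · exact div_le_div_of_nonneg_right (pow_le_of_le_one hm.1 hm.2 two_ne_zero) (sq_nonneg _)
  · rw [value_eq_of_obedience obedience]
    ring

/-- symmetric equilibrium moment of targeted disclosure.  Let `r < 1`,
`u v w : ℝ`, `α = v + w`, `β = r·w − u`, `m ∈ [0,1]`, and set `ξ̄₁ = m/(1−rm)²`,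
`ξ̄₂ = m²/(1−rm)²`, `ζ̄ = m/(1−rm)`.  Then `(ξ̄₁, ξ̄₂, ζ̄)` satisfies symmetric obedience
`ξ̄₁ = r·ξ̄₂ + ζ̄` and positivity `ξ̄₁ ≥ ξ̄₂ ≥ ζ̄²`, and its designer value satisfies
`v·ξ̄₁ + u·ξ̄₂ + w·ζ̄ = V_tg(m) = (α·m − β·m²)/(1−rm)²`. -/
theorem symmetric_eqMoment_value (r u v w m : ℝ) (hr : r < 1)
    (hm : m ∈ Set.Icc (0:ℝ) 1) :
    m / (1 - r * m) ^ 2 = r * (m ^ 2 / (1 - r * m) ^ 2) + m / (1 - r * m) ∧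
    m ^ 2 / (1 - r * m) ^ 2 ≤ m / (1 - r * m) ^ 2 ∧
    (m / (1 - r * m)) ^ 2 ≤ m ^ 2 / (1 - r * m) ^ 2 ∧
    v * (m / (1 - r * m) ^ 2) + u * (m ^ 2 / (1 - r * m) ^ 2) + w * (m / (1 - r * m)) =
      ((v + w) * m - (r * w - u) * m ^ 2) / (1 - r * m) ^ 2 :=
  symmetric_eqMoment_value_general r u v w m hm
end
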